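/- Let C be a small category and F : Cᵒᵖ ⥤ Type a presheaf of sets on C. Then there exists a regular cardinal κ such that F is a κ-presentable object of the presheaf category Fun(Cᵒᵖ, Type): the functor Hom(F, −) from presheaves to sets preserves colimits of κ-filtered diagrams. -/

import Mathlib

/-!
Presheaf categories are locally presentable (they are generated under colimits by the
representable presheaves, which are presentable since evaluation at an object preserves all
colimits), and every object of a locally presentable category is `κ`-presentable for some
regular cardinal `κ`.
-/

open CategoryTheory CategoryTheory.Limits

universe v u

section

/-- `K` is `κ`-filtered: every diagram in `K` indexed by a small category with fewer than `κ`
morphisms admits a cocone. -/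
def IsCardFiltered (κ : Cardinal.{v}) (K : Type v) [SmallCategory K] : Prop :=
  ∀ (D : Type v) [SmallCategory D], Cardinal.mk (Arrow D) < κ →
    ∀ G : D ⥤ K, Nonempty (Cocone G)

variable {A : Type u} [Category.{v} A]

/-- `z` is `κ`-presentable: `Hom_A(z, −)` preserves colimits of `κ`-filtered diagrams. -/
def IsCardPresentable (κ : Cardinal.{v}) (z : A) : Prop :=
  ∀ (K : Type v) [SmallCategory K], IsCardFiltered κ K →
    PreservesColimitsOfShape K (coyoneda.obj (Opposite.op z))

theorem isCardinalFiltered_of_isCardFiltered {κ : Cardinal.{v}} [Fact κ.IsRegular]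
    {K : Type v} [SmallCategory K] (hK : IsCardFiltered κ K) : IsCardinalFiltered K κ where
  nonempty_cocone G hG := hK _ ((hasCardinalLT_iff_cardinal_mk_lt _ κ).1 hG) G

theorem isCardPresentable_of_isCardinalPresentable (κ : Cardinal.{v}) [Fact κ.IsRegular]
    (z : A) [IsCardinalPresentable z κ] : IsCardPresentable κ z := fun K _ hK =>
  have := isCardinalFiltered_of_isCardFiltered hK
  preservesColimitsOfShape_of_isCardinalPresentable z κ K

theorem stmt14 {C : Type u} [SmallCategory C] (F : Cᵒᵖ ⥤ Type u) :
    ∃ κ : Cardinal.{u}, κ.IsRegular ∧ IsCardPresentable κ F := by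
  obtain ⟨κ, hκ, _⟩ := (inferInstance : IsPresentable.{u} F).exists_cardinal
  exact ⟨κ, hκ.out, isCardPresentable_of_isCardinalPresentable κ F⟩

end
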